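/- Let T = [[P, 0],[0, S]] be a block-diagonal operator on H ⊕ H with P, S ∈ B(H). Then max{ω_q(P), ω_q(S)} ≤ ω_q(T) ≤ |q|·max{ω(P), ω(S)} + √(1−|q|²)·(‖P‖²+‖S‖²)^{1/2}. -/

import Mathlib

open scoped InnerProductSpace

variable {H : Type*} [NormedAddCommGroup H] [InnerProductSpace ℂ H]

/-- The joint `q`-numerical range of a `d`-tuple of bounded operators:
`{(⟨T₁x,y⟩,…,⟨T_dx,y⟩) : ‖x‖ = ‖y‖ = 1, ⟨x,y⟩ = q}` (with `⟨x,y⟩` linear in `x`). -/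
def JtW {d : ℕ} (q : ℂ) (T : Fin d → H →L[ℂ] H) : Set (Fin d → ℂ) :=
  {z | ∃ x y : H, ‖x‖ = 1 ∧ ‖y‖ = 1 ∧ ⟪y, x⟫_ℂ = q ∧ z = fun i => ⟪y, (T i) x⟫_ℂ}


/-- The `2×2` block operator `[[P,Q],[R,S]]` acting on `H ⊕ H` (with the Hilbert space
structure of `WithLp 2 (H × H)`). -/
noncomputable def blockOp [CompleteSpace H] (P Q R S : H →L[ℂ] H) :
    WithLp 2 (H × H) →L[ℂ] WithLp 2 (H × H) :=
  ((WithLp.prodContinuousLinearEquiv 2 ℂ H H).symm.toContinuousLinearMap) ∘L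
    (((P ∘L ContinuousLinearMap.fst ℂ H H + Q ∘L ContinuousLinearMap.snd ℂ H H).prod
      (R ∘L ContinuousLinearMap.fst ℂ H H + S ∘L ContinuousLinearMap.snd ℂ H H))) ∘L
    ((WithLp.prodContinuousLinearEquiv 2 ℂ H H).toContinuousLinearMap)

/-- The joint `q`-numerical radius. -/
noncomputable def Jtw {K : Type*} [NormedAddCommGroup K] [InnerProductSpace ℂ K] {d : ℕ}
    (q : ℂ) (T : Fin d → K →L[ℂ] K) : ℝ :=
  sSup {r | ∃ x y : K, ‖x‖ = 1 ∧ ‖y‖ = 1 ∧ ⟪y, x⟫_ℂ = q ∧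
    r = Real.sqrt (∑ i, ‖⟪y, (T i) x⟫_ℂ‖ ^ 2)}

/-- The single-operator `q`-numerical radius. -/
noncomputable def wq {K : Type*} [NormedAddCommGroup K] [InnerProductSpace ℂ K]
    (q : ℂ) (S : K →L[ℂ] K) : ℝ :=
  sSup {r | ∃ x y : K, ‖x‖ = 1 ∧ ‖y‖ = 1 ∧ ⟪y, x⟫_ℂ = q ∧ r = ‖⟪y, S x⟫_ℂ‖}

/-- The classical numerical radius. -/
noncomputable def nr {K : Type*} [NormedAddCommGroup K] [InnerProductSpace ℂ K]
    (T : K →L[ℂ] K) : ℝ :=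
  sSup {r | ∃ x : K, ‖x‖ = 1 ∧ r = ‖⟪x, T x⟫_ℂ‖}

/-!
For unit vectors with `⟪y, x⟫ = q`, write `y = conj q • x + z` with `z ⊥ x` and
`‖z‖ = √(1 - ‖q‖²)`, so that `⟪y, T x⟫ = q ⟪x, T x⟫ + ⟪z, T x⟫`. For `T = P ⊕ S` and
`‖x₁‖² + ‖x₂‖² = 1`, the first term is bounded by `max (ω P) (ω S)` (a convex combination of
`ω P` and `ω S`) and `‖T x‖ ≤ √(‖P‖² + ‖S‖²)`. The lower bound holds because `P` and `S` are
the compressions of `T` to the isometric copies `H ⊕ 0` and `0 ⊕ H`.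
-/

section NumericalRadius

variable {K : Type*} [NormedAddCommGroup K] [InnerProductSpace ℂ K]

lemma norm_inner_apply_le_opNorm (T : K →L[ℂ] K) {x y : K} (hx : ‖x‖ = 1) (hy : ‖y‖ = 1) :
    ‖⟪y, T x⟫_ℂ‖ ≤ ‖T‖ :=
  calc ‖⟪y, T x⟫_ℂ‖ ≤ ‖y‖ * ‖T x‖ := norm_inner_le_norm _ _
    _ ≤ ‖y‖ * (‖T‖ * ‖x‖) := by gcongr; exact T.le_opNorm x
    _ = ‖T‖ := by rw [hx, hy, one_mul, mul_one]

lemma wq_nonneg (q : ℂ) (T : K →L[ℂ] K) : 0 ≤ wq q T :=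
  Real.sSup_nonneg <| by rintro r ⟨x, y, -, -, -, rfl⟩; positivity

lemma nr_nonneg (T : K →L[ℂ] K) : 0 ≤ nr T :=
  Real.sSup_nonneg <| by rintro r ⟨x, -, rfl⟩; positivity

lemma norm_inner_apply_le_wq (T : K →L[ℂ] K) {x y : K} (hx : ‖x‖ = 1) (hy : ‖y‖ = 1) :
    ‖⟪y, T x⟫_ℂ‖ ≤ wq ⟪y, x⟫_ℂ T :=
  le_csSup ⟨‖T‖, by rintro r ⟨x, y, hx, hy, -, rfl⟩; exact norm_inner_apply_le_opNorm T hx hy⟩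
    ⟨x, y, hx, hy, rfl, rfl⟩

lemma wq_le {q : ℂ} {T : K →L[ℂ] K} {c : ℝ} (hc : 0 ≤ c)
    (h : ∀ x y : K, ‖x‖ = 1 → ‖y‖ = 1 → ⟪y, x⟫_ℂ = q → ‖⟪y, T x⟫_ℂ‖ ≤ c) : wq q T ≤ c :=
  Real.sSup_le (by rintro r ⟨x, y, hx, hy, hxy, rfl⟩; exact h x y hx hy hxy) hc

lemma norm_inner_self_apply_le_nr (T : K →L[ℂ] K) {x : K} (hx : ‖x‖ = 1) :
    ‖⟪x, T x⟫_ℂ‖ ≤ nr T :=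
  le_csSup ⟨‖T‖, by rintro r ⟨x, hx, rfl⟩; exact norm_inner_apply_le_opNorm T hx hx⟩
    ⟨x, hx, rfl⟩

lemma norm_inner_self_apply_le_sq_mul_nr (T : K →L[ℂ] K) (u : K) :
    ‖⟪u, T u⟫_ℂ‖ ≤ ‖u‖ ^ 2 * nr T := by
  rcases eq_or_ne u 0 with rfl | hu
  · simp
  have hu' : ‖u‖ ≠ 0 := norm_ne_zero_iff.mpr hu
  set v : K := ((‖u‖⁻¹ : ℝ) : ℂ) • u
  have hv : ‖v‖ = 1 := by simp [v, norm_smul, hu']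
  have hvu : ‖⟪v, T v⟫_ℂ‖ = ‖⟪u, T u⟫_ℂ‖ / ‖u‖ ^ 2 := by
    simp only [v, map_smul, inner_smul_left, inner_smul_right, norm_mul, RCLike.norm_conj,
      Complex.norm_real, norm_inv, norm_norm]
    field_simp
  calc ‖⟪u, T u⟫_ℂ‖ = ‖u‖ ^ 2 * ‖⟪v, T v⟫_ℂ‖ := by rw [hvu]; field_simp
    _ ≤ ‖u‖ ^ 2 * nr T := by gcongr; exact norm_inner_self_apply_le_nr T hv

lemma wq_le_wq_of_inner_map_map {L : Type*} [NormedAddCommGroup L] [InnerProductSpace ℂ L]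
    (q : ℂ) (A : K →L[ℂ] K) (T : L →L[ℂ] L) (J : K → L) (hJ : ∀ u v, ⟪J u, J v⟫_ℂ = ⟪u, v⟫_ℂ)
    (hT : ∀ x y, ⟪J y, T (J x)⟫_ℂ = ⟪y, A x⟫_ℂ) : wq q A ≤ wq q T := by
  have hJnorm (u : K) : ‖J u‖ = ‖u‖ := by
    rw [norm_eq_sqrt_re_inner (𝕜 := ℂ), hJ, ← norm_eq_sqrt_re_inner]
  refine wq_le (wq_nonneg q T) fun x y hx hy hxy => ?_
  subst hxy
  rw [← hT, ← hJ]
  exact norm_inner_apply_le_wq T (by rw [hJnorm, hx]) (by rw [hJnorm, hy])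

lemma norm_inner_le_norm_inner_mul_add_sqrt {x y : K} (hx : ‖x‖ = 1) (hy : ‖y‖ = 1) (v : K) :
    ‖⟪y, v⟫_ℂ‖ ≤ ‖⟪y, x⟫_ℂ‖ * ‖⟪x, v⟫_ℂ‖ + √(1 - ‖⟪y, x⟫_ℂ‖ ^ 2) * ‖v‖ := by
  set q := ⟪y, x⟫_ℂ
  set z := y - (starRingEnd ℂ) q • x
  have hz : ‖z‖ = √(1 - ‖q‖ ^ 2) := by
    have hre : RCLike.re ((starRingEnd ℂ) q * q) = ‖q‖ ^ 2 := by
      rw [Complex.conj_mul']; norm_cast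
    rw [← Real.sqrt_sq (norm_nonneg z), norm_sub_sq (𝕜 := ℂ), inner_smul_right, hre, norm_smul,
      hx, hy]
    simp only [one_pow, RCLike.norm_conj, mul_one]
    congr 1; ring
  have hyv : ⟪y, v⟫_ℂ = q * ⟪x, v⟫_ℂ + ⟪z, v⟫_ℂ := by
    rw [inner_sub_left, inner_smul_left, Complex.conj_conj]; ring
  calc ‖⟪y, v⟫_ℂ‖ ≤ ‖q‖ * ‖⟪x, v⟫_ℂ‖ + ‖z‖ * ‖v‖ := by
        rw [hyv, ← norm_mul]
        exact (norm_add_le _ _).trans (by gcongr; exact norm_inner_le_norm z v)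
    _ = ‖q‖ * ‖⟪x, v⟫_ℂ‖ + √(1 - ‖q‖ ^ 2) * ‖v‖ := by rw [hz]

end NumericalRadius

section BlockDiagonal

variable [CompleteSpace H]

lemma blockOp_zero_zero_apply_fst (P S : H →L[ℂ] H) (x : WithLp 2 (H × H)) :
    (blockOp P 0 0 S x).fst = P x.fst := by
  simp [blockOp]

lemma blockOp_zero_zero_apply_snd (P S : H →L[ℂ] H) (x : WithLp 2 (H × H)) :
    (blockOp P 0 0 S x).snd = S x.snd := by
  simp [blockOp]

lemma inner_blockOp_zero_zero_apply (P S : H →L[ℂ] H) (x y : WithLp 2 (H × H)) :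
    ⟪y, blockOp P 0 0 S x⟫_ℂ = ⟪y.fst, P x.fst⟫_ℂ + ⟪y.snd, S x.snd⟫_ℂ := by
  simp only [WithLp.prod_inner_apply, WithLp.ofLp_fst, WithLp.ofLp_snd, blockOp_zero_zero_apply_fst,
    blockOp_zero_zero_apply_snd]

lemma norm_blockOp_zero_zero_apply_le (P S : H →L[ℂ] H) (x : WithLp 2 (H × H)) :
    ‖blockOp P 0 0 S x‖ ≤ √(‖P‖ ^ 2 + ‖S‖ ^ 2) * ‖x‖ := by
  rw [← Real.sqrt_sq (norm_nonneg x), ← Real.sqrt_mul (by positivity)]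
  apply Real.le_sqrt_of_sq_le
  rw [WithLp.prod_norm_sq_eq_of_L2, WithLp.prod_norm_sq_eq_of_L2, blockOp_zero_zero_apply_fst,
    blockOp_zero_zero_apply_snd]
  have hP : ‖P x.fst‖ ^ 2 ≤ ‖P‖ ^ 2 * ‖x.fst‖ ^ 2 := by
    rw [← mul_pow]; gcongr; exact P.le_opNorm _
  have hS : ‖S x.snd‖ ^ 2 ≤ ‖S‖ ^ 2 * ‖x.snd‖ ^ 2 := by
    rw [← mul_pow]; gcongr; exact S.le_opNorm _
  nlinarith [mul_nonneg (sq_nonneg ‖P‖) (sq_nonneg ‖x.snd‖),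
    mul_nonneg (sq_nonneg ‖S‖) (sq_nonneg ‖x.fst‖)]

lemma norm_inner_self_blockOp_zero_zero_apply_le (P S : H →L[ℂ] H) (x : WithLp 2 (H × H)) :
    ‖⟪x, blockOp P 0 0 S x⟫_ℂ‖ ≤ ‖x‖ ^ 2 * max (nr P) (nr S) := by
  rw [inner_blockOp_zero_zero_apply, WithLp.prod_norm_sq_eq_of_L2, add_mul]
  calc _ ≤ ‖⟪x.fst, P x.fst⟫_ℂ‖ + ‖⟪x.snd, S x.snd⟫_ℂ‖ := norm_add_le _ _
    _ ≤ ‖x.fst‖ ^ 2 * nr P + ‖x.snd‖ ^ 2 * nr S :=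
      add_le_add (norm_inner_self_apply_le_sq_mul_nr P _) (norm_inner_self_apply_le_sq_mul_nr S _)
    _ ≤ _ := by gcongr; exacts [le_max_left _ _, le_max_right _ _]

lemma wq_le_wq_blockOp_zero_zero_left (q : ℂ) (P S : H →L[ℂ] H) :
    wq q P ≤ wq q (blockOp P 0 0 S) :=
  wq_le_wq_of_inner_map_map q P _ (fun u => WithLp.toLp 2 (u, 0))
    (fun u v => by simp [WithLp.prod_inner_apply])
    (fun x y => by rw [inner_blockOp_zero_zero_apply]; simp)

lemma wq_le_wq_blockOp_zero_zero_right (q : ℂ) (P S : H →L[ℂ] H) :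
    wq q S ≤ wq q (blockOp P 0 0 S) :=
  wq_le_wq_of_inner_map_map q S _ (fun u => WithLp.toLp 2 (0, u))
    (fun u v => by simp [WithLp.prod_inner_apply])
    (fun x y => by rw [inner_blockOp_zero_zero_apply]; simp)

end BlockDiagonal

theorem stmt_16_general [CompleteSpace H] (q : ℂ) (P S : H →L[ℂ] H) :
    max (wq q P) (wq q S) ≤ wq q (blockOp P 0 0 S) ∧
      wq q (blockOp P 0 0 S) ≤
        ‖q‖ * max (nr P) (nr S) +
          Real.sqrt (1 - ‖q‖ ^ 2) * Real.sqrt (‖P‖ ^ 2 + ‖S‖ ^ 2) := by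
  set T := blockOp P 0 0 S
  have hbound_nonneg : 0 ≤ ‖q‖ * max (nr P) (nr S) + √(1 - ‖q‖ ^ 2) * √(‖P‖ ^ 2 + ‖S‖ ^ 2) :=
    add_nonneg (mul_nonneg (norm_nonneg q) ((nr_nonneg P).trans (le_max_left _ _))) (by positivity)
  refine ⟨max_le (wq_le_wq_blockOp_zero_zero_left q P S) (wq_le_wq_blockOp_zero_zero_right q P S),
    wq_le hbound_nonneg fun x y hx hy hxy => ?_⟩
  calc ‖⟪y, T x⟫_ℂ‖ ≤ ‖⟪y, x⟫_ℂ‖ * ‖⟪x, T x⟫_ℂ‖ + √(1 - ‖⟪y, x⟫_ℂ‖ ^ 2) * ‖T x‖ :=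
        norm_inner_le_norm_inner_mul_add_sqrt hx hy (T x)
    _ ≤ _ := by
        rw [hxy]
        gcongr
        · simpa [hx] using norm_inner_self_blockOp_zero_zero_apply_le P S x
        · simpa [hx] using norm_blockOp_zero_zero_apply_le P S x

theorem stmt_16 [CompleteSpace H] (q : ℂ) (hq : ‖q‖ ≤ 1) (P S : H →L[ℂ] H) :
    max (wq q P) (wq q S) ≤ wq q (blockOp P 0 0 S) ∧
      wq q (blockOp P 0 0 S) ≤
        ‖q‖ * max (nr P) (nr S) +
          Real.sqrt (1 - ‖q‖ ^ 2) * Real.sqrt (‖P‖ ^ 2 + ‖S‖ ^ 2) :=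
  stmt_16_general q P S
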